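/- arXiv:1801.06041 — 2 statements merged into one kernel-verified Lean document; each statement's English description precedes it below -/
import Mathlib

section
/- If an array A is a (t+1)-constrained covering array with 0 ≤ t < k, then A is a (1̄, t̄)-constrained locating array. -/
def Test (k : ℕ) := Fin k → ℕ

def Interaction (k : ℕ) := Fin k → Option ℕ

/-- A test covers an interaction iff it extends it. -/
def Covers {k : ℕ} (σ : Test k) (T : Interaction k) : Prop :=
  ∀ i v, T i = some v → σ i = v

/-- Strength of an interaction: number of factors it assigns. -/
def strength {k : ℕ} (T : Interaction k) : ℕ :=
  (Finset.univ.filter (fun i => (T i).isSome)).card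

/-- Set of rows (indices) of array `A` covering interaction `T`. -/
def rho {k : ℕ} (A : List (Test k)) (T : Interaction k) : Set ℕ :=
  {n | ∃ h : n < A.length, Covers (A.get ⟨n, h⟩) T}

def rhoSet {k : ℕ} (A : List (Test k)) (𝒯 : Set (Interaction k)) : Set ℕ :=
  ⋃ T ∈ 𝒯, rho A T

/-- An array all of whose rows are valid tests. -/
def ValidArray {k : ℕ} (valid : Test k → Prop) (A : List (Test k)) : Prop :=
  ∀ σ ∈ A, valid σ

/-- A valid interaction: one covered by some valid test. -/
def ValidInt {k : ℕ} (valid : Test k → Prop) (T : Interaction k) : Prop :=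
  ∃ σ, valid σ ∧ Covers σ T

/-- Two sets of interactions are distinguishable iff some array of valid tests
separates their ρ-values. -/
def Distinguishable {k : ℕ} (valid : Test k → Prop) (𝒯₁ 𝒯₂ : Set (Interaction k)) : Prop :=
  ∃ A : List (Test k), ValidArray valid A ∧ rhoSet A 𝒯₁ ≠ rhoSet A 𝒯₂

def rhoFin {k : ℕ} (A : List (Test k)) (𝒯 : Finset (Interaction k)) : Set ℕ :=
  rhoSet A ↑𝒯

/-- A is an s-CCA: every valid s-way interaction is covered by some row. -/
def IsCCA {k : ℕ} (valid : Test k → Prop) (s : ℕ) (A : List (Test k)) : Prop :=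
  ValidArray valid A ∧
  ∀ T : Interaction k, ValidInt valid T → strength T = s → rho A T ≠ ∅

/-- A is a (1̄,t̄)-constrained locating array. -/
def IsCLAbar1bart {k : ℕ} (valid : Test k → Prop) (t : ℕ) (A : List (Test k)) : Prop :=
  ValidArray valid A ∧
  ∀ 𝒯₁ 𝒯₂ : Finset (Interaction k),
    (∀ T ∈ 𝒯₁, ValidInt valid T ∧ strength T ≤ t) →
    (∀ T ∈ 𝒯₂, ValidInt valid T ∧ strength T ≤ t) →
    𝒯₁.card ≤ 1 → 𝒯₂.card ≤ 1 →
    Distinguishable valid ↑𝒯₁ ↑𝒯₂ →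
    rhoFin A 𝒯₁ ≠ rhoFin A 𝒯₂

/-! Given a valid test `σ` covering `T` with `strength T ≤ t` and any factor `i`, enlarge the
support of `T` together with `i` to a set `S` of exactly `t + 1 ≤ k` factors. The restriction of
`σ` to `S` is a valid `(t + 1)`-way interaction, so a row of the CCA covers it: that row covers `T`
and agrees with `σ` at `i`. Thus every valid `T` of strength at most `t` is covered. If moreover
`σ` covers `T₁` but not `T₂`, say `T₂ i = v ≠ σ i`, the row obtained for `T₁` and `i` lies in
`ρ(T₁)` but not in `ρ(T₂)`; a separating row of any valid array provides such a `σ`. -/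

variable {k : ℕ}

def Test.restrict (σ : Test k) (S : Finset (Fin k)) : Interaction k :=
  fun j => if j ∈ S then some (σ j) else none

lemma Test.covers_restrict_iff {τ σ : Test k} {S : Finset (Fin k)} :
    Covers τ (σ.restrict S) ↔ ∀ j ∈ S, τ j = σ j := by
  simp only [Covers, Test.restrict]
  constructor
  · intro h j hj
    exact h j (σ j) (if_pos hj)
  · intro h j v hv
    split_ifs at hv with hj
    · exact (h j hj).trans (Option.some_injective _ hv)

lemma Test.strength_restrict (σ : Test k) (S : Finset (Fin k)) :
    strength (σ.restrict S) = S.card := by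
  unfold strength Test.restrict
  congr 1
  ext j
  by_cases hj : j ∈ S <;> simp [hj]

lemma mem_rho_iff_of_lt {A : List (Test k)} {T : Interaction k} {n : ℕ} (hn : n < A.length) :
    n ∈ rho A T ↔ Covers (A.get ⟨n, hn⟩) T :=
  ⟨fun ⟨_, h⟩ => h, fun h => ⟨hn, h⟩⟩

lemma rhoFin_empty (A : List (Test k)) : rhoFin A ∅ = ∅ := by
  simp [rhoFin, rhoSet]

lemma rhoSet_singleton (A : List (Test k)) (T : Interaction k) : rhoSet A {T} = rho A T := by
  simp [rhoSet]

lemma rhoFin_singleton (A : List (Test k)) (T : Interaction k) : rhoFin A {T} = rho A T := by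
  simp [rhoFin, rhoSet_singleton]

lemma not_distinguishable_self (valid : Test k → Prop) (𝒯 : Set (Interaction k)) :
    ¬ Distinguishable valid 𝒯 𝒯 :=
  fun ⟨_, _, hne⟩ => hne rfl

lemma Distinguishable.exists_valid_covers_xor {valid : Test k → Prop} {T₁ T₂ : Interaction k}
    (hd : Distinguishable valid {T₁} {T₂}) :
    ∃ σ, valid σ ∧ ¬ (Covers σ T₁ ↔ Covers σ T₂) := by
  obtain ⟨B, hB, hne⟩ := hd
  rw [rhoSet_singleton, rhoSet_singleton, Ne, Set.ext_iff, not_forall] at hne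
  obtain ⟨n, hn⟩ := hne
  by_cases hlen : n < B.length
  · refine ⟨B.get ⟨n, hlen⟩, hB _ (List.get_mem _ _), ?_⟩
    rwa [mem_rho_iff_of_lt hlen, mem_rho_iff_of_lt hlen] at hn
  · exact absurd (iff_of_false (fun ⟨h, _⟩ => hlen h) fun ⟨h, _⟩ => hlen h) hn

lemma Finset.eq_empty_or_eq_singleton_of_card_le_one {α : Type*} {s : Finset α}
    (hs : s.card ≤ 1) : s = ∅ ∨ ∃ a, s = {a} := by
  rcases Nat.le_one_iff_eq_zero_or_eq_one.mp hs with h0 | h1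
  · exact Or.inl (Finset.card_eq_zero.mp h0)
  · exact Or.inr (Finset.card_eq_one.mp h1)

namespace IsCCA

variable {valid : Test k → Prop} {t : ℕ} {A : List (Test k)}

lemma exists_row_covers_and_eq (h : IsCCA valid (t + 1) A) (ht : t < k) {T : Interaction k}
    {σ : Test k} (hσ : valid σ) (hc : Covers σ T) (hs : strength T ≤ t) (i : Fin k) :
    ∃ n, ∃ hn : n < A.length, Covers (A.get ⟨n, hn⟩) T ∧ A.get ⟨n, hn⟩ i = σ i := by
  set D := Finset.univ.filter (fun j => (T j).isSome)
  have hcard : (insert i D).card ≤ t + 1 := (Finset.card_insert_le i D).trans (Nat.succ_le_succ hs)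
  obtain ⟨S, hDS, hS⟩ :=
    Finset.exists_superset_card_eq hcard (by simpa using ht : t + 1 ≤ Fintype.card (Fin k))
  have hvalid : ValidInt valid (σ.restrict S) :=
    ⟨σ, hσ, Test.covers_restrict_iff.mpr fun _ _ => rfl⟩
  obtain ⟨n, hn, hrow⟩ := Set.nonempty_iff_ne_empty.mpr
    (h.2 _ hvalid (by rw [Test.strength_restrict, hS]))
  have hagree := Test.covers_restrict_iff.mp hrow
  refine ⟨n, hn, fun j v hv => ?_, hagree i (hDS (Finset.mem_insert_self i D))⟩
  have hjD : j ∈ D := by simp [D, hv]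
  rw [hagree j (hDS (Finset.mem_insert_of_mem hjD))]
  exact hc j v hv

lemma rho_nonempty (h : IsCCA valid (t + 1) A) (ht : t < k) {T : Interaction k}
    (hT : ValidInt valid T) (hs : strength T ≤ t) : (rho A T).Nonempty := by
  obtain ⟨σ, hσ, hc⟩ := hT
  obtain ⟨n, hn, hcov, -⟩ := h.exists_row_covers_and_eq ht hσ hc hs ⟨0, by omega⟩
  exact ⟨n, hn, hcov⟩

lemma rho_ne_of_covers_of_not_covers (h : IsCCA valid (t + 1) A) (ht : t < k)
    {T₁ T₂ : Interaction k} (hs : strength T₁ ≤ t) {σ : Test k} (hσ : valid σ)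
    (h₁ : Covers σ T₁) (h₂ : ¬ Covers σ T₂) : rho A T₁ ≠ rho A T₂ := by
  simp only [Covers, not_forall] at h₂
  obtain ⟨i, v, hTi, hne⟩ := h₂
  obtain ⟨n, hn, hcov, hi⟩ := h.exists_row_covers_and_eq ht hσ h₁ hs i
  intro heq
  have hmem : n ∈ rho A T₂ := heq ▸ (mem_rho_iff_of_lt hn).mpr hcov
  exact hne (hi ▸ (mem_rho_iff_of_lt hn).mp hmem i v hTi)

lemma rho_ne_of_covers_xor (h : IsCCA valid (t + 1) A) (ht : t < k) {T₁ T₂ : Interaction k}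
    (hs₁ : strength T₁ ≤ t) (hs₂ : strength T₂ ≤ t) {σ : Test k} (hσ : valid σ)
    (hxor : ¬ (Covers σ T₁ ↔ Covers σ T₂)) : rho A T₁ ≠ rho A T₂ := by
  by_cases h₁ : Covers σ T₁
  · exact h.rho_ne_of_covers_of_not_covers ht hs₁ hσ h₁ fun h₂ => hxor (iff_of_true h₁ h₂)
  · exact (h.rho_ne_of_covers_of_not_covers ht hs₂ hσ
      (Classical.byContradiction fun h₂ => hxor (iff_of_false h₁ h₂)) h₁).symm

end IsCCA

theorem stmt8_general {k : ℕ} (valid : Test k → Prop) (t : ℕ) (ht : t < k)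
    (A : List (Test k)) (h : IsCCA valid (t + 1) A) :
    IsCLAbar1bart valid t A := by
  refine ⟨h.1, fun 𝒯₁ 𝒯₂ h₁ h₂ hc₁ hc₂ hd => ?_⟩
  rcases Finset.eq_empty_or_eq_singleton_of_card_le_one hc₁ with rfl | ⟨T₁, rfl⟩ <;>
    rcases Finset.eq_empty_or_eq_singleton_of_card_le_one hc₂ with rfl | ⟨T₂, rfl⟩ <;>
    simp only [rhoFin_empty, rhoFin_singleton, Finset.coe_empty, Finset.coe_singleton,
      Finset.mem_singleton, forall_eq] at hd h₁ h₂ ⊢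
  · exact absurd hd (not_distinguishable_self valid ∅)
  · exact (h.rho_nonempty ht h₂.1 h₂.2).ne_empty.symm
  · exact (h.rho_nonempty ht h₁.1 h₁.2).ne_empty
  · obtain ⟨σ, hσ, hxor⟩ := hd.exists_valid_covers_xor
    exact h.rho_ne_of_covers_xor ht h₁.2 h₂.2 hσ hxor

theorem stmt8 {k : ℕ} (valid : Test k → Prop) (t : ℕ) (ht : t < k)
    (hR : ∃ σ : Test k, valid σ)
    (A : List (Test k)) (h : IsCCA valid (t + 1) A) :
    IsCLAbar1bart valid t A :=
  stmt8_general valid t ht A h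
end

section
/- Let A be a (t+1)-constrained covering array. Let T_a and T_b be valid interactions of strength at most t that agree on all common factors (or share no factors). If some valid test σ covers T_a but not T_b, then there is a row of A covering T_a but not T_b; hence ρ_A(T_a) ≠ ρ_A(T_b). -/
/-- A is an s-CCA (covering every valid interaction of strength at most s). -/
def IsCCAle {k : ℕ} (valid : Test k → Prop) (s : ℕ) (A : List (Test k)) : Prop :=
  ValidArray valid A ∧
  ∀ T : Interaction k, ValidInt valid T → strength T ≤ s → rho A T ≠ ∅

/-! If `σ` covers `T_a` but not `T_b`, pick a factor `j` where `σ` contradicts `T_b`; since `T_a`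
and `T_b` agree on common factors, `T_a` leaves `j` free. Extending `T_a` by `(j, σ j)` gives a
valid interaction of strength at most `t + 1`, so some row of the `(t+1)`-CCA covers it; that row
covers `T_a` and, disagreeing with `T_b` at `j`, does not cover `T_b`. -/

variable {k : ℕ}

lemma exists_ne_of_not_covers {σ : Test k} {T : Interaction k} (h : ¬ Covers σ T) :
    ∃ j v, T j = some v ∧ σ j ≠ v := by
  simpa [Covers] using h

lemma Covers.update_self {σ : Test k} {T : Interaction k} (h : Covers σ T) (j : Fin k) :
    Covers σ (Function.update T j (some (σ j))) := by
  intro i v hi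
  by_cases hij : i = j
  · subst hij
    exact Option.some.inj ((Function.update_self i _ T).symm.trans hi)
  · exact h i v ((Function.update_of_ne hij _ T).symm.trans hi)

lemma Covers.of_update_of_eq_none {τ : Test k} {T : Interaction k} {j : Fin k} {x : ℕ}
    (h : Covers τ (Function.update T j (some x))) (hj : T j = none) : Covers τ T := by
  intro i v hi
  have hij : i ≠ j := by rintro rfl; simp [hj] at hi
  exact h i v ((Function.update_of_ne hij _ T).trans hi)

lemma strength_update_le (T : Interaction k) (j : Fin k) (x : Option ℕ) :
    strength (Function.update T j x) ≤ strength T + 1 := by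
  unfold strength
  calc _ ≤ (insert j (Finset.univ.filter fun i => (T i).isSome)).card := by
        refine Finset.card_le_card fun i hi => ?_
        by_cases hij : i = j
        · simp [hij]
        · have hi := (congrArg Option.isSome (Function.update_of_ne hij x T)).symm.trans
            (Finset.mem_filter.mp hi).2
          exact Finset.mem_insert_of_mem (by simpa using hi)
    _ ≤ _ := Finset.card_insert_le _ _

lemma IsCCAle.exists_mem_rho {valid : Test k → Prop} {s : ℕ} {A : List (Test k)}
    (hA : IsCCAle valid s A) {T : Interaction k} (hT : ValidInt valid T) (hs : strength T ≤ s) :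
    ∃ n, n ∈ rho A T :=
  Set.nonempty_iff_ne_empty.mpr (hA.2 T hT hs)

theorem stmt12_general {k : ℕ} (valid : Test k → Prop) (t : ℕ) (A : List (Test k))
    (hA : IsCCAle valid (t + 1) A)
    (Ta Tb : Interaction k)
    (hsa : strength Ta ≤ t)
    (hagree : ∀ i v w, Ta i = some v → Tb i = some w → v = w)
    (σ : Test k) (hσ : valid σ) (hca : Covers σ Ta) (hcb : ¬ Covers σ Tb) :
    (∃ n ∈ rho A Ta, n ∉ rho A Tb) ∧ rho A Ta ≠ rho A Tb := by
  obtain ⟨j, v, hTbj, hσj⟩ := exists_ne_of_not_covers hcb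
  have hTaj : Ta j = none := by
    cases hTa : Ta j with
    | none => rfl
    | some w => exact absurd (hagree j w v hTa hTbj ▸ hca j w hTa) hσj
  obtain ⟨n, hlt, hrow⟩ := hA.exists_mem_rho ⟨σ, hσ, hca.update_self j⟩
    ((strength_update_le Ta j _).trans (Nat.succ_le_succ hsa))
  have hmem : n ∈ rho A Ta := ⟨hlt, hrow.of_update_of_eq_none hTaj⟩
  have hnot : n ∉ rho A Tb := by
    rintro ⟨_, hcov⟩
    exact hσj (hrow j (σ j) (Function.update_self _ _ _) ▸ hcov j v hTbj)
  exact ⟨⟨n, hmem, hnot⟩, fun h => hnot (h ▸ hmem)⟩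

theorem stmt12 {k : ℕ} (valid : Test k → Prop) (t : ℕ) (A : List (Test k))
    (hA : IsCCAle valid (t + 1) A)
    (Ta Tb : Interaction k) (hva : ValidInt valid Ta) (hvb : ValidInt valid Tb)
    (hsa : strength Ta ≤ t) (hsb : strength Tb ≤ t)
    (hagree : ∀ i v w, Ta i = some v → Tb i = some w → v = w)
    (σ : Test k) (hσ : valid σ) (hca : Covers σ Ta) (hcb : ¬ Covers σ Tb) :
    (∃ n ∈ rho A Ta, n ∉ rho A Tb) ∧ rho A Ta ≠ rho A Tb :=
  stmt12_general valid t A hA Ta Tb hsa hagree σ hσ hca hcb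
end
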